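/- Let F be a field of characteristic zero and let q ∈ F be nonzero. Let p(X) ∈ F[X] be an irreducible polynomial and let P = p(x) be its image in the quantum plane O_q(F²) under the unique F-algebra homomorphism F[X] → O_q(F²) sending X to x. If P is central in O_q(F²), then P is prime in O_q(F²). The same conclusion holds with y in place of x. -/

import Mathlib

noncomputable section

/-- The defining relation of the quantum plane: `y * x = q • (x * y)`. -/
inductive QRel (F : Type) [Field F] (q : F) :
    FreeAlgebra F (Fin 2) → FreeAlgebra F (Fin 2) → Prop
  | rel : QRel F q (FreeAlgebra.ι F 1 * FreeAlgebra.ι F 0)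
      (q • (FreeAlgebra.ι F 0 * FreeAlgebra.ι F 1))

/-- The quantum plane `O_q(F²)`. -/
abbrev QPlane (F : Type) [Field F] (q : F) : Type := RingQuot (QRel F q)

/-- The generator `x` of the quantum plane. -/
def Qx (F : Type) [Field F] (q : F) : QPlane F q :=
  RingQuot.mkAlgHom F (QRel F q) (FreeAlgebra.ι F 0)

/-- The generator `y` of the quantum plane. -/
def Qy (F : Type) [Field F] (q : F) : QPlane F q :=
  RingQuot.mkAlgHom F (QRel F q) (FreeAlgebra.ι F 1)

/-- `r` divides `s` if `s = r·t` or `s = t·r` for some `t`. -/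
def EltDvd {R : Type} [Ring R] (r s : R) : Prop :=
  ∃ t : R, s = r * t ∨ s = t * r

/-- `r` is prime if `r ∣ s·t` implies `r ∣ s` or `r ∣ t`. -/
def IsPrimeElt {R : Type} [Ring R] (r : R) : Prop :=
  ∀ s t : R, EltDvd r (s * t) → EltDvd r s ∨ EltDvd r t

/-- An element is central if it commutes with everything. -/
def IsCentralElt {R : Type} [Ring R] (r : R) : Prop :=
  ∀ s : R, r * s = s * r

/-!
The quantum plane acts on `F[X][Y]` with `x` acting as multiplication by `X` and `y` as `Y ∘ σ`,
where `σ f (X) = f (qX)`. Evaluating this action at `1` identifies `O_q(F²)` with `F[X][Y]` carrying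
the skew product `(a Yʲ)(b Yᵏ) = a σʲ(b) Yʲ⁺ᵏ`, and `p(x)` with the constant `p`.
If `P = p(x)` is central, comparing `P y` with `y P` gives `σ p = p`; as `σ` is invertible for
`q ≠ 0`, then `p ∣ σ a ↔ p ∣ a`. Now `P` divides `z` iff `p` divides every coordinate of `z`, and
the proof is a Gauss lemma: if `j₀`, `k₀` are the largest indices of coefficients of `f`, `g` not
divisible by `p`, then modulo `p` the coefficient of index `j₀ + k₀` of the skew product is
`f_{j₀} σ^{j₀}(g_{k₀})`, which `p` does not divide.
The statement for `y` follows through the isomorphism `O_q(F²) ≅ O_{q⁻¹}(F²)` exchanging `x` and `y`.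
-/

section RingEquiv

variable {R S : Type} [Ring R] [Ring S] (e : R ≃+* S) {r : R}

lemma EltDvd.map {s : R} (h : EltDvd r s) : EltDvd (e r) (e s) := by
  obtain ⟨t, rfl | rfl⟩ := h
  exacts [⟨e t, Or.inl (map_mul e r t)⟩, ⟨e t, Or.inr (map_mul e t r)⟩]

lemma IsCentralElt.map (h : IsCentralElt r) : IsCentralElt (e r) := fun s => by
  simpa using congrArg e (h (e.symm s))

lemma IsPrimeElt.map (h : IsPrimeElt r) : IsPrimeElt (e r) := fun s t hst => by
  have := h (e.symm s) (e.symm t) (by simpa using hst.map e.symm)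
  simpa using this.imp (EltDvd.map e) (EltDvd.map e)

end RingEquiv

namespace Polynomial

section CommSemiring

variable {R : Type*} [CommSemiring R]

def dilate (r : R) : R[X] →ₐ[R] R[X] := aeval (C r * X)

lemma dilate_dilate (a b : R) (f : R[X]) : dilate a (dilate b f) = dilate (b * a) f := by
  rw [← AlgHom.comp_apply]
  congr 1
  refine algHom_ext ?_
  simp [dilate, ← mul_assoc]

lemma dilate_one (f : R[X]) : dilate 1 f = f := by
  simp [dilate]

-- The multiplication of the skew polynomial ring `R[X; σ]`, where `X * a = σ a * X`.
def skewMul (σ : R →+* R) (f g : R[X]) : R[X] :=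
  f.sum fun j a => monomial j a * g.map (σ ^ j)

variable (σ : R →+* R)

lemma monomial_skewMul (j : ℕ) (a : R) (g : R[X]) :
    skewMul σ (monomial j a) g = monomial j a * g.map (σ ^ j) :=
  sum_monomial_index _ _ (by simp)

lemma C_skewMul (a : R) (g : R[X]) : skewMul σ (C a) g = C a * g := by
  rw [← monomial_zero_left, monomial_skewMul, pow_zero, RingHom.one_def, map_id]

@[simp] lemma zero_skewMul (g : R[X]) : skewMul σ 0 g = 0 := sum_zero_index _

lemma add_skewMul (f f' g : R[X]) : skewMul σ (f + f') g = skewMul σ f g + skewMul σ f' g :=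
  sum_add_index _ _ _ (by simp) (by simp [add_mul])

lemma smul_skewMul {S : Type*} [CommSemiring S] [Algebra S R] (s : S) (f g : R[X]) :
    skewMul σ (s • f) g = s • skewMul σ f g := by
  rw [skewMul, sum_smul_index' _ _ _ (by simp), skewMul, sum_def, sum_def, Finset.smul_sum]
  simp only [← smul_monomial, smul_mul_assoc]

lemma dvd_pow_apply_iff {p : R} (hσ : ∀ a, p ∣ σ a ↔ p ∣ a) (j : ℕ) (a : R) :
    p ∣ (σ ^ j) a ↔ p ∣ a := by
  induction j generalizing a with
  | zero => rfl
  | succ j ih => rw [pow_succ, RingHom.mul_def, RingHom.comp_apply, ih, hσ]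

lemma exists_max_not_dvd_coeff {p : R} {f : R[X]} (h : ∃ j, ¬ p ∣ f.coeff j) :
    ∃ j₀, ¬ p ∣ f.coeff j₀ ∧ ∀ j, j₀ < j → p ∣ f.coeff j := by
  have hbdd : BddAbove {j | ¬ p ∣ f.coeff j} := ⟨f.natDegree, fun j hj => by
    by_contra hlt
    exact hj (by rw [coeff_eq_zero_of_natDegree_lt (not_le.mp hlt)]; exact dvd_zero p)⟩
  exact ⟨_, Nat.sSup_mem h hbdd, fun j hj => not_not.mp fun hnd => (le_csSup hbdd hnd).not_gt hj⟩

end CommSemiring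

section CommRing

variable {R : Type*} [CommRing R] (σ : R →+* R)

lemma dvd_coeff_skewMul_add_iff {p : R} (hσ : ∀ a, p ∣ σ a ↔ p ∣ a) {f g : R[X]} {j₀ k₀ : ℕ}
    (hj₀ : j₀ ∈ f.support) (hf : ∀ j, j₀ < j → p ∣ f.coeff j) (hg : ∀ k, k₀ < k → p ∣ g.coeff k) :
    p ∣ (skewMul σ f g).coeff (j₀ + k₀) ↔ p ∣ f.coeff j₀ * (σ ^ j₀) (g.coeff k₀) := by
  have hterm : ∀ j, (monomial j (f.coeff j) * g.map (σ ^ j)).coeff (j₀ + k₀) =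
      f.coeff j * if j ≤ j₀ + k₀ then (σ ^ j) (g.coeff (j₀ + k₀ - j)) else 0 := by
    intro j
    rw [← C_mul_X_pow_eq_monomial, mul_assoc, coeff_C_mul, coeff_X_pow_mul']
    split_ifs <;> simp [coeff_map]
  rw [skewMul, sum_def, finsetSum_coeff, ← Finset.add_sum_erase _ _ hj₀, hterm,
    if_pos (Nat.le_add_right _ _), Nat.add_sub_cancel_left]
  refine dvd_add_left (Finset.dvd_sum fun j hj => ?_)
  rw [hterm]
  rcases lt_or_gt_of_ne (Finset.ne_of_mem_erase hj) with hlt | hgt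
  · rw [if_pos (by omega)]
    exact Dvd.dvd.mul_left ((dvd_pow_apply_iff σ hσ j _).mpr (hg _ (by omega))) _
  · exact Dvd.dvd.mul_right (hf j hgt) _

lemma C_dvd_or_C_dvd_of_C_dvd_skewMul {p : R} (hp : Prime p) (hσ : ∀ a, p ∣ σ a ↔ p ∣ a)
    {f g : R[X]} (h : C p ∣ skewMul σ f g) : C p ∣ f ∨ C p ∣ g := by
  simp only [C_dvd_iff_dvd_coeff] at h ⊢
  by_contra! hfg
  obtain ⟨j₀, hj₀, hf⟩ := exists_max_not_dvd_coeff hfg.1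
  obtain ⟨k₀, hk₀, hg⟩ := exists_max_not_dvd_coeff hfg.2
  have hj₀_mem : j₀ ∈ f.support := mem_support_iff.mpr fun h0 => hj₀ (h0 ▸ dvd_zero p)
  rcases hp.dvd_or_dvd ((dvd_coeff_skewMul_add_iff σ hσ hj₀_mem hf hg).mp (h _)) with h' | h'
  · exact hj₀ h'
  · exact hk₀ ((dvd_pow_apply_iff σ hσ j₀ _).mp h')

end CommRing

lemma dvd_dilate_iff {K : Type*} [Field K] {q : K} (hq : q ≠ 0) {p : K[X]} (hp : dilate q p = p)
    (a : K[X]) : p ∣ dilate q a ↔ p ∣ a := by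
  have hinv : ∀ f, dilate q⁻¹ (dilate q f) = f := fun f => by
    rw [dilate_dilate, mul_inv_cancel₀ hq, dilate_one]
  have hp' : dilate q⁻¹ p = p := by simpa only [hp] using hinv p
  constructor
  · intro h
    simpa only [hinv, hp'] using _root_.map_dvd (dilate q⁻¹) h
  · intro h
    simpa only [hp] using _root_.map_dvd (dilate q) h

end Polynomial

open Polynomial

namespace QPlane

variable {F : Type} [Field F] {q : F}

lemma Qy_mul_Qx : Qy F q * Qx F q = q • (Qx F q * Qy F q) := by
  have h := RingQuot.mkAlgHom_rel F (QRel.rel (F := F) (q := q))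
  rwa [map_mul, map_smul, map_mul] at h

lemma Qy_pow_mul_Qx (j : ℕ) : Qy F q ^ j * Qx F q = q ^ j • (Qx F q * Qy F q ^ j) := by
  induction j with
  | zero => simp
  | succ j ih =>
    rw [pow_succ, mul_assoc, Qy_mul_Qx, mul_smul_comm, ← mul_assoc, ih, smul_mul_assoc, smul_smul,
      mul_assoc, ← pow_succ, ← pow_succ']

lemma algHom_ext {A : Type*} [Semiring A] [Algebra F A] {f g : QPlane F q →ₐ[F] A}
    (hx : f (Qx F q) = g (Qx F q)) (hy : f (Qy F q) = g (Qy F q)) : f = g := by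
  refine RingQuot.ringQuot_ext' F f g (FreeAlgebra.hom_ext (funext fun i => ?_))
  fin_cases i
  exacts [hx, hy]

lemma span_monomials :
    Submodule.span F (Set.range fun ij : ℕ × ℕ => Qx F q ^ ij.1 * Qy F q ^ ij.2) = ⊤ := by
  set T := Submodule.span F (Set.range fun ij : ℕ × ℕ => Qx F q ^ ij.1 * Qy F q ^ ij.2)
  have hmem : ∀ i j, Qx F q ^ i * Qy F q ^ j ∈ T := fun i j => Submodule.subset_span ⟨(i, j), rfl⟩
  have hgen : ∀ z ∈ ({Qx F q, Qy F q} : Set (QPlane F q)), ∀ t ∈ T, t * z ∈ T := by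
    rintro z hz t ht
    induction ht using Submodule.span_induction with
    | mem _ h =>
      obtain ⟨⟨i, j⟩, rfl⟩ := h
      rcases hz with rfl | rfl
      · rw [mul_assoc, Qy_pow_mul_Qx, mul_smul_comm, ← mul_assoc, ← pow_succ]
        exact T.smul_mem _ (hmem _ _)
      · rw [mul_assoc, ← pow_succ]
        exact hmem _ _
    | zero => simp
    | add _ _ _ _ h₁ h₂ => rw [add_mul]; exact T.add_mem h₁ h₂
    | smul c _ _ h => rw [smul_mul_assoc]; exact T.smul_mem c h
  have hall : ∀ z t, t ∈ T → t * z ∈ T := by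
    intro z
    obtain ⟨w, rfl⟩ := RingQuot.mkAlgHom_surjective F (QRel F q) z
    induction w using FreeAlgebra.induction with
    | grade0 r =>
      intro t ht
      rw [AlgHom.commutes, ← Algebra.commutes, ← Algebra.smul_def]
      exact T.smul_mem r ht
    | grade1 i => fin_cases i; exacts [hgen _ (Or.inl rfl), hgen _ (Or.inr rfl)]
    | add a b ha hb => intro t ht; rw [map_add, mul_add]; exact T.add_mem (ha t ht) (hb t ht)
    | mul a b ha hb => intro t ht; rw [map_mul, ← mul_assoc]; exact hb _ (ha t ht)
  exact Submodule.eq_top_iff'.mpr fun z => by simpa using hall z 1 (by simpa using hmem 0 0)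

-- On `F[X][Y]` (written `F[X][X]`), `x` multiplies by the inner variable and `y` acts as
-- `f(X, Y) ↦ Y f(qX, Y)`; evaluating at `1` turns this faithful action into coordinates.
variable (q) in
def yEnd : Module.End F F[X][X] :=
  Algebra.lmul F F[X][X] X * (mapAlgHom (dilate q)).toLinearMap

lemma yEnd_apply (v : F[X][X]) : yEnd q v = X * v.map (dilate q).toRingHom := rfl

lemma yEnd_pow_apply (j : ℕ) (v : F[X][X]) :
    (yEnd q ^ j) v = X ^ j * v.map ((dilate q).toRingHom ^ j) := by
  induction j with
  | zero => simp [RingHom.one_def]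
  | succ j ih =>
    rw [pow_succ', Module.End.mul_apply, ih, yEnd_apply, Polynomial.map_mul, Polynomial.map_pow,
      map_X, map_map, ← mul_assoc, ← pow_succ', ← RingHom.mul_def, ← pow_succ']

lemma yEnd_mul_lmul_C_X :
    yEnd q * Algebra.lmul F F[X][X] (C X) = q • (Algebra.lmul F F[X][X] (C X) * yEnd q) := by
  ext1 v
  simp only [Algebra.coe_lmul_eq_mul, Module.End.mul_apply, LinearMap.mul_apply_apply, yEnd_apply,
    dilate, AlgHom.toRingHom_eq_coe, Polynomial.map_mul, map_C, RingHom.coe_coe, aeval_X, map_mul,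
    Algebra.smul_def, Module.algebraMap_end_apply, Polynomial.algebraMap_apply, algebraMap_eq]
  ring

variable (q) in
def rep : QPlane F q →ₐ[F] Module.End F F[X][X] :=
  RingQuot.liftAlgHom F ⟨FreeAlgebra.lift F ![Algebra.lmul F F[X][X] (C X), yEnd q], by
    rintro _ _ ⟨⟩
    simpa using yEnd_mul_lmul_C_X⟩

lemma rep_Qx : rep q (Qx F q) = Algebra.lmul F F[X][X] (C X) := by
  simp [rep, Qx]

lemma rep_Qy : rep q (Qy F q) = yEnd q := by
  simp [rep, Qy]

lemma rep_monomial_apply (i j : ℕ) (v : F[X][X]) :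
    rep q (Qx F q ^ i * Qy F q ^ j) v = monomial j (X ^ i) * v.map ((dilate q).toRingHom ^ j) := by
  rw [map_mul, map_pow, map_pow, rep_Qx, rep_Qy, Module.End.mul_apply, yEnd_pow_apply, ← map_pow,
    Algebra.coe_lmul_eq_mul, LinearMap.mul_apply', ← C_pow, ← mul_assoc, C_mul_X_pow_eq_monomial]

variable (q) in
def coords : QPlane F q →ₗ[F] F[X][X] := LinearMap.applyₗ 1 ∘ₗ (rep q).toLinearMap

lemma coords_apply (z : QPlane F q) : coords q z = rep q z 1 := rfl

lemma coords_monomial (i j : ℕ) : coords q (Qx F q ^ i * Qy F q ^ j) = monomial j (X ^ i) := by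
  rw [coords_apply, rep_monomial_apply, Polynomial.map_one, mul_one]

lemma rep_apply (z : QPlane F q) (v : F[X][X]) :
    rep q z v = skewMul (dilate q).toRingHom (coords q z) v := by
  have hz : z ∈ Submodule.span F _ := span_monomials (q := q) ▸ Submodule.mem_top
  induction hz using Submodule.span_induction generalizing v with
  | mem _ h =>
    obtain ⟨⟨i, j⟩, rfl⟩ := h
    rw [rep_monomial_apply, coords_monomial, monomial_skewMul]
  | zero => simp
  | add _ _ _ _ h₁ h₂ => rw [map_add, map_add, LinearMap.add_apply, h₁, h₂, add_skewMul]
  | smul c _ _ h => rw [map_smul, map_smul, LinearMap.smul_apply, h, smul_skewMul]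

lemma coords_mul (z w : QPlane F q) :
    coords q (z * w) = skewMul (dilate q).toRingHom (coords q z) (coords q w) := by
  rw [coords_apply, map_mul, Module.End.mul_apply, rep_apply, ← coords_apply]

lemma coords_Qy : coords q (Qy F q) = X := by
  simpa [monomial_one_one_eq_X] using coords_monomial (q := q) 0 1

lemma coords_aeval_Qx (p : F[X]) : coords q (aeval (Qx F q) p) = C p := by
  rw [coords_apply, ← aeval_algHom_apply, rep_Qx, aeval_algHom_apply, Algebra.coe_lmul_eq_mul,
    LinearMap.mul_apply', mul_one, ← algebraMap_eq, aeval_algebraMap_apply, aeval_X_left_apply,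
    algebraMap_eq]

variable (q) in
def fromCoords : F[X][X] →ₗ[F] QPlane F q :=
  lsum fun j => LinearMap.mulRight F (Qy F q ^ j) ∘ₗ (aeval (Qx F q)).toLinearMap

lemma fromCoords_monomial (j : ℕ) (a : F[X]) :
    fromCoords q (monomial j a) = aeval (Qx F q) a * Qy F q ^ j := by
  simp [fromCoords]

lemma fromCoords_coords (z : QPlane F q) : fromCoords q (coords q z) = z := by
  refine LinearMap.congr_fun (LinearMap.ext_on_range (f := fromCoords q ∘ₗ coords q)
    (g := LinearMap.id) span_monomials fun ij => ?_) z
  simp [coords_monomial, fromCoords_monomial]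

lemma fromCoords_C_mul (a : F[X]) (w : F[X][X]) :
    fromCoords q (C a * w) = aeval (Qx F q) a * fromCoords q w := by
  induction w using Polynomial.induction_on' with
  | add f g hf hg => rw [mul_add, map_add, hf, hg, map_add, mul_add]
  | monomial j b => rw [C_mul_monomial, fromCoords_monomial, fromCoords_monomial, map_mul, mul_assoc]

lemma dilate_eq_of_isCentralElt {p : F[X]} (hcent : IsCentralElt (aeval (Qx F q) p)) :
    dilate q p = p := by
  have h := congrArg (coords q) (hcent (Qy F q))
  rw [coords_mul, coords_mul, coords_aeval_Qx, coords_Qy, C_skewMul, ← monomial_one_one_eq_X,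
    monomial_skewMul, map_C, monomial_one_one_eq_X, mul_comm] at h
  exact (C_inj.mp (mul_left_cancel₀ X_ne_zero h)).symm

lemma eltDvd_of_C_dvd_coords {p : F[X]} {z : QPlane F q} (h : C p ∣ coords q z) :
    EltDvd (aeval (Qx F q) p) z := by
  obtain ⟨w, hw⟩ := h
  exact ⟨fromCoords q w, Or.inl (by rw [← fromCoords_C_mul, ← hw, fromCoords_coords])⟩

theorem isPrimeElt_aeval_Qx (hq : q ≠ 0) {p : F[X]} (hirr : Irreducible p)
    (hcent : IsCentralElt (aeval (Qx F q) p)) : IsPrimeElt (aeval (Qx F q) p) := by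
  have hσ : ∀ a, p ∣ (dilate q).toRingHom a ↔ p ∣ a :=
    dvd_dilate_iff hq (dilate_eq_of_isCentralElt hcent)
  rintro s t ⟨v, hv⟩
  have hst : s * t = aeval (Qx F q) p * v := hv.elim id fun h => h.trans (hcent v).symm
  have hC : C p ∣ skewMul (dilate q).toRingHom (coords q s) (coords q t) :=
    ⟨coords q v, by rw [← coords_mul, hst, coords_mul, coords_aeval_Qx, C_skewMul]⟩
  exact (C_dvd_or_C_dvd_of_C_dvd_skewMul _ hirr.prime hσ hC).imp
    eltDvd_of_C_dvd_coords eltDvd_of_C_dvd_coords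

def swap {q r : F} (h : q * r = 1) : QPlane F q →ₐ[F] QPlane F r :=
  RingQuot.liftAlgHom F ⟨FreeAlgebra.lift F ![Qy F r, Qx F r], by
    rintro _ _ ⟨⟩
    simp [Qy_mul_Qx, smul_smul, h]⟩

lemma swap_Qx {q r : F} (h : q * r = 1) : swap h (Qx F q) = Qy F r := by
  simp [swap, Qx]

lemma swap_Qy {q r : F} (h : q * r = 1) : swap h (Qy F q) = Qx F r := by
  simp [swap, Qy]

def swapEquiv {q r : F} (h : q * r = 1) : QPlane F q ≃ₐ[F] QPlane F r :=
  AlgEquiv.ofAlgHom (swap h) (swap (mul_comm q r ▸ h))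
    (algHom_ext (by simp [swap_Qx, swap_Qy]) (by simp [swap_Qx, swap_Qy]))
    (algHom_ext (by simp [swap_Qx, swap_Qy]) (by simp [swap_Qx, swap_Qy]))

lemma swapEquiv_Qy {q r : F} (h : q * r = 1) : swapEquiv h (Qy F q) = Qx F r :=
  swap_Qy h

end QPlane

theorem stmt_12_general (F : Type) [Field F] (q : F) (hq : q ≠ 0)
    (p : Polynomial F) (hirr : Irreducible p) :
    (IsCentralElt (Polynomial.aeval (Qx F q) p) →
        IsPrimeElt (Polynomial.aeval (Qx F q) p)) ∧
    (IsCentralElt (Polynomial.aeval (Qy F q) p) →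
        IsPrimeElt (Polynomial.aeval (Qy F q) p)) := by
  refine ⟨QPlane.isPrimeElt_aeval_Qx hq hirr, fun hcent => ?_⟩
  let e : QPlane F q ≃+* QPlane F q⁻¹ := (QPlane.swapEquiv (mul_inv_cancel₀ hq)).toRingEquiv
  have he : e (aeval (Qy F q) p) = aeval (Qx F q⁻¹) p := by
    rw [AlgEquiv.coe_ringEquiv, ← aeval_algHom_apply, QPlane.swapEquiv_Qy]
  have hprime := QPlane.isPrimeElt_aeval_Qx (inv_ne_zero hq) hirr (he ▸ hcent.map e)
  simpa [← he] using hprime.map e.symm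

theorem stmt_12 (F : Type) [Field F] [CharZero F] (q : F) (hq : q ≠ 0)
    (p : Polynomial F) (hirr : Irreducible p) :
    (IsCentralElt (Polynomial.aeval (Qx F q) p) →
        IsPrimeElt (Polynomial.aeval (Qx F q) p)) ∧
    (IsCentralElt (Polynomial.aeval (Qy F q) p) →
        IsPrimeElt (Polynomial.aeval (Qy F q) p)) :=
  stmt_12_general F q hq p hirr

end
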